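/- arXiv:2210.03026 — 2 statements merged into one kernel-verified Lean document; each statement's English description precedes it below -/
import Mathlib

section
/- Swapping two consecutive independent events in an interleaving yields a valid interleaving, provided the two events are not both send events from the same source process to the same target process. -/
/-- Actions of a message-passing concurrent language with dynamic
process spawning and selective receives. -/
inductive MAction (Pid Tag Val Cstr : Type) : Type where
  | spawn (p : Pid)
  | send (t : Tag) (v : Val) (p : Pid)
  | receive (t : Tag) (cs : Cstr)

/-- An event `p : a` consists of a pid and an action. -/
structure MEvent (Pid Tag Val Cstr : Type) : Type where
  pid : Pid
  act : MAction Pid Tag Val Cstr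

variable {Pid Tag Val Cstr : Type}

/-- Direct (base) dependency between two events: same pid, spawn
dependency, or send/receive dependency on the same message tag. -/
def EvDep (e e' : MEvent Pid Tag Val Cstr) : Prop :=
  e.pid = e'.pid ∨ e.act = MAction.spawn e'.pid ∨
    ∃ t v cs, e.act = MAction.send t v e'.pid ∧ e'.act = MAction.receive t cs

/-- Two events are independent if neither directly depends on the other. -/
def Indep (e e' : MEvent Pid Tag Val Cstr) : Prop := ¬ EvDep e e' ∧ ¬ EvDep e' e

/-- Base happened-before relation on positions of a sequence of events. -/
def hbBase (S : List (MEvent Pid Tag Val Cstr)) (i j : ℕ) : Prop :=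
  i < j ∧ ∃ ei ej, S[i]? = some ei ∧ S[j]? = some ej ∧ EvDep ei ej

/-- The happened-before relation `⇝_S` on positions: the transitive
closure of the base relation. -/
def hb (S : List (MEvent Pid Tag Val Cstr)) : ℕ → ℕ → Prop :=
  Relation.TransGen (hbBase S)

/-- The happened-before relation on events (rather than positions). -/
def hbE (S : List (MEvent Pid Tag Val Cstr)) (e e' : MEvent Pid Tag Val Cstr) : Prop :=
  ∃ i j, S[i]? = some e ∧ S[j]? = some e' ∧ hb S i j

/-- A single swap of two consecutive independent events. -/
def Swap (S S' : List (MEvent Pid Tag Val Cstr)) : Prop :=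
  ∃ (L₁ L₂ : List (MEvent Pid Tag Val Cstr)) (e e' : MEvent Pid Tag Val Cstr),
    Indep e e' ∧ S = L₁ ++ e :: e' :: L₂ ∧ S' = L₁ ++ e' :: e :: L₂

/-- Causal equivalence `S ≈ S'`: a finite number of swaps of consecutive
independent events (note that `Swap` is symmetric). -/
def CausalEq (S S' : List (MEvent Pid Tag Val Cstr)) : Prop :=
  Relation.ReflTransGen Swap S S'

/-- Well-formedness conditions of an interleaving with initial pid `p1`,
parameterized by the matching function `mtch` on values and constraints. -/
def IsInterleaving (mtch : Val → Cstr → Bool) (p1 : Pid)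
    (S : List (MEvent Pid Tag Val Cstr)) : Prop :=
  -- (1) every event of a non-initial pid is preceded by its spawn
  (∀ j ej, S[(j : ℕ)]? = some ej → ej.pid = p1 ∨
     ∃ i ei, i < j ∧ S[(i : ℕ)]? = some ei ∧ ei.pid ≠ ej.pid ∧
       ei.act = MAction.spawn ej.pid) ∧
  -- (2) every receive is preceded by a matching send
  (∀ j ej t cs, S[(j : ℕ)]? = some ej → ej.act = MAction.receive t cs →
     ∃ i ei v, i < j ∧ S[(i : ℕ)]? = some ei ∧
       ei.act = MAction.send t v ej.pid ∧ mtch v cs = true) ∧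
  -- (3) FIFO with matching between each pair of processes
  (∀ i j ei ej t v cs, S[(i : ℕ)]? = some ei → S[(j : ℕ)]? = some ej →
     ei.act = MAction.send t v ej.pid → ej.act = MAction.receive t cs →
     ∀ i' ei' t' v', i' < i → S[(i' : ℕ)]? = some ei' → ei'.pid = ei.pid →
       ei'.act = MAction.send t' v' ej.pid →
       mtch v' cs = false ∨ ∃ j' ej' cs', j' < j ∧ S[(j' : ℕ)]? = some ej' ∧
         ej'.pid = ej.pid ∧ ej'.act = MAction.receive t' cs') ∧
  -- (4) uniqueness of pids (spawn arguments) and message tags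
  ((∀ i j ei ej q, S[(i : ℕ)]? = some ei → S[(j : ℕ)]? = some ej →
     ei.act = MAction.spawn q → ej.act = MAction.spawn q → i = j) ∧
   (∀ i j ei ej t v q v' q', S[(i : ℕ)]? = some ei → S[(j : ℕ)]? = some ej →
     ei.act = MAction.send t v q → ej.act = MAction.send t v' q' → i = j))

/-- The sequence of actions of process `p` in `S`, in order. -/
def actions [DecidableEq Pid] (p : Pid) (S : List (MEvent Pid Tag Val Cstr)) :
    List (MAction Pid Tag Val Cstr) :=
  (S.filter (fun e => decide (e.pid = p))).map MEvent.act

/-- The trace of an interleaving: the mapping from each pid to its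
sequence of actions. -/
def tr [DecidableEq Pid] (S : List (MEvent Pid Tag Val Cstr)) :
    Pid → List (MAction Pid Tag Val Cstr) :=
  fun p => actions p S

/-- `S` is a linearization of the trace `τ` (with initial pid `p1`). -/
def InSched [DecidableEq Pid] (mtch : Val → Cstr → Bool) (p1 : Pid)
    (τ : Pid → List (MAction Pid Tag Val Cstr))
    (S : List (MEvent Pid Tag Val Cstr)) : Prop :=
  IsInterleaving mtch p1 S ∧ tr S = τ

/-- A trace is a mapping coming from some interleaving. -/
def IsTrace [DecidableEq Pid] (mtch : Val → Cstr → Bool) (p1 : Pid)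
    (τ : Pid → List (MAction Pid Tag Val Cstr)) : Prop :=
  ∃ S, InSched mtch p1 τ S

/-- Subtrace relation: `τ' ≪ τ` iff each `τ' p` is a prefix of `τ p`. -/
def Subtrace (τ' τ : Pid → List (MAction Pid Tag Val Cstr)) : Prop :=
  ∀ p, τ' p <+: τ p

/-- Base happened-before relation on trace events, identified by a pid
and a position in the action sequence of that pid. -/
def hbTBase (τ : Pid → List (MAction Pid Tag Val Cstr)) :
    Pid × ℕ → Pid × ℕ → Prop := fun x y =>
  (x.1 = y.1 ∧ x.2 < y.2) ∨
  ((τ x.1)[x.2]? = some (MAction.spawn y.1)) ∨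
  (∃ t v cs, (τ x.1)[x.2]? = some (MAction.send t v y.1) ∧
     (τ y.1)[y.2]? = some (MAction.receive t cs))

/-- Happened-before relation `⇝_τ` induced by a trace. -/
def hbT (τ : Pid → List (MAction Pid Tag Val Cstr)) :
    Pid × ℕ → Pid × ℕ → Prop :=
  Relation.TransGen (hbTBase τ)

/-- `ℓ'` races with the message `ℓ` received by the `j`-th action of
process `p` (a receive with constraint `cs`), via the `i`-th action of
the sender `p'`. -/
def InRaceSetVia (mtch : Val → Cstr → Bool)
    (τ : Pid → List (MAction Pid Tag Val Cstr)) (p : Pid) (j : ℕ)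
    (t : Tag) (cs : Cstr) (p' : Pid) (i : ℕ) (t' : Tag) : Prop :=
  t' ≠ t ∧ ∃ v', (τ p')[i]? = some (MAction.send t' v' p) ∧
    mtch v' cs = true ∧ ¬ hbT τ (p, j) (p', i) ∧
    ∀ i' t'' v'', i' < i → (τ p')[i']? = some (MAction.send t'' v'' p) →
      mtch v'' cs = false ∨
        ∃ j' cs'', j' < j ∧ (τ p)[j']? = some (MAction.receive t'' cs'')

/-- `t' ∈ race_set_τ(t)` for the receive at position `j` of process `p`. -/
def InRaceSet (mtch : Val → Cstr → Bool)
    (τ : Pid → List (MAction Pid Tag Val Cstr)) (p : Pid) (j : ℕ)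
    (t : Tag) (cs : Cstr) (t' : Tag) : Prop :=
  ∃ p' i, InRaceSetVia mtch τ p j t cs p' i t'

/-- The function `rdep`, removing the actions that causally depend on a
given sequence of actions, given as an inductive relation mirroring its
defining equations. -/
inductive RDep [DecidableEq Pid] :
    List (MAction Pid Tag Val Cstr) →
    (Pid → List (MAction Pid Tag Val Cstr)) →
    (Pid → List (MAction Pid Tag Val Cstr)) → Prop where
  | nil (τ : Pid → List (MAction Pid Tag Val Cstr)) : RDep [] τ τ
  | rcv (t : Tag) (cs : Cstr) (A' : List (MAction Pid Tag Val Cstr)) (τ τ' :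
      Pid → List (MAction Pid Tag Val Cstr)) :
      RDep A' τ τ' → RDep (MAction.receive t cs :: A') τ τ'
  | spwn (p : Pid) (A' : List (MAction Pid Tag Val Cstr)) (τ τ' :
      Pid → List (MAction Pid Tag Val Cstr)) :
      RDep (A' ++ τ p) (Function.update τ p []) τ' →
      RDep (MAction.spawn p :: A') τ τ'
  | send_rec (t : Tag) (v : Val) (p : Pid) (cs : Cstr)
      (A' A'' Astar : List (MAction Pid Tag Val Cstr))
      (τ τ' : Pid → List (MAction Pid Tag Val Cstr)) :
      τ p = A'' ++ MAction.receive t cs :: Astar →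
      RDep (A' ++ Astar) (Function.update τ p A'') τ' →
      RDep (MAction.send t v p :: A') τ τ'
  | send_norec (t : Tag) (v : Val) (p : Pid)
      (A' : List (MAction Pid Tag Val Cstr))
      (τ τ' : Pid → List (MAction Pid Tag Val Cstr)) :
      (∀ cs, MAction.receive t cs ∉ τ p) → RDep A' τ τ' →
      RDep (MAction.send t v p :: A') τ τ'

def swapIdx (n k : ℕ) : ℕ := if k = n then n + 1 else if k = n + 1 then n else k

lemma swapIdx_swapIdx (n k : ℕ) : swapIdx n (swapIdx n k) = k := by
  unfold swapIdx; split_ifs <;> omega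

lemma swapIdx_lt {n i j : ℕ} (h : i < j) (hne : ¬(i = n ∧ j = n + 1)) :
    swapIdx n i < swapIdx n j := by
  unfold swapIdx; split_ifs <;> omega

lemma swapIdx_self (n : ℕ) : swapIdx n n = n + 1 := by simp [swapIdx]

lemma swapIdx_succ (n : ℕ) : swapIdx n (n + 1) = n := by simp [swapIdx]

lemma getq_mid {α : Type*} (L₁ L₂ : List α) (a b : α) :
    (L₁ ++ a :: b :: L₂)[L₁.length]? = some a := by
  simp

lemma getq_mid' {α : Type*} (L₁ L₂ : List α) (a b : α) :
    (L₁ ++ a :: b :: L₂)[L₁.length + 1]? = some b := by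
  rw [List.getElem?_append_right (by omega)]
  have : L₁.length + 1 - L₁.length = 1 := by omega
  rw [this]; rfl

lemma getq_cases {α : Type*} (L₁ L₂ : List α) (a b : α) (k : ℕ) :
    (L₁ ++ a :: b :: L₂)[k]? =
      if k < L₁.length then L₁[k]?
      else if k = L₁.length then some a
      else if k = L₁.length + 1 then some b
      else L₂[k - L₁.length - 2]? := by
  split_ifs with h1 h2 h3
  · exact List.getElem?_append_left h1
  · subst h2; exact getq_mid L₁ L₂ a b
  · subst h3; exact getq_mid' L₁ L₂ a b
  · rw [List.getElem?_append_right (by omega)]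
    have : k - L₁.length = (k - L₁.length - 2) + 2 := by omega
    rw [this]; rfl

lemma get?_swapIdx {α : Type*} (L₁ L₂ : List α) (a b : α) (k : ℕ) :
    (L₁ ++ b :: a :: L₂)[k]? = (L₁ ++ a :: b :: L₂)[swapIdx L₁.length k]? := by
  rw [getq_cases, getq_cases]
  unfold swapIdx
  split_ifs <;> first
    | rfl
    | omega
    | (congr 1; omega)

/-- swapping two consecutive independent events in an
interleaving yields a valid interleaving, provided the two events are not
both send events from the same source process to the same target
process. -/
theorem swap_isInterleaving (mtch : Val → Cstr → Bool) (p1 : Pid)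
    (L₁ L₂ : List (MEvent Pid Tag Val Cstr)) (e e' : MEvent Pid Tag Val Cstr)
    (h : IsInterleaving mtch p1 (L₁ ++ e :: e' :: L₂))
    (hind : Indep e e')
    (hns : ¬ (e.pid = e'.pid ∧ ∃ t v t' v' q,
      e.act = MAction.send t v q ∧ e'.act = MAction.send t' v' q)) :
    IsInterleaving mtch p1 (L₁ ++ e' :: e :: L₂) := by
  obtain ⟨h1, h2, h3, h4s, h4t⟩ := h
  set n := L₁.length with hn
  have key : ∀ k, (L₁ ++ e' :: e :: L₂)[k]?
      = (L₁ ++ e :: e' :: L₂)[swapIdx n k]? := fun k => get?_swapIdx L₁ L₂ e e' k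
  have hSn : (L₁ ++ e :: e' :: L₂)[n]? = some e := getq_mid L₁ L₂ e e'
  have hSn1 : (L₁ ++ e :: e' :: L₂)[n + 1]? = some e' := getq_mid' L₁ L₂ e e'
  refine ⟨?_, ?_, ?_, ?_, ?_⟩
  · -- (1) spawn precedence
    intro j ej hj
    rw [key] at hj
    rcases h1 _ ej hj with hp | ⟨i, ei, hlt, hi, hne, hsp⟩
    · exact Or.inl hp
    · right
      refine ⟨swapIdx n i, ei, ?_, ?_, hne, hsp⟩
      · by_cases hc : i = n ∧ swapIdx n j = n + 1
        · exfalso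
          rw [hc.1, hSn] at hi
          rw [hc.2, hSn1] at hj
          injection hi with hi; injection hj with hj
          subst hi; subst hj
          exact hind.1 (Or.inr (Or.inl hsp))
        · have := swapIdx_lt hlt hc
          rwa [swapIdx_swapIdx] at this
      · rw [key, swapIdx_swapIdx]; exact hi
  · -- (2) receive has matching earlier send
    intro j ej t cs hj hrecv
    rw [key] at hj
    obtain ⟨i, ei, v, hlt, hi, hsend, hm⟩ := h2 _ ej t cs hj hrecv
    refine ⟨swapIdx n i, ei, v, ?_, ?_, hsend, hm⟩
    · by_cases hc : i = n ∧ swapIdx n j = n + 1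
      · exfalso
        rw [hc.1, hSn] at hi
        rw [hc.2, hSn1] at hj
        injection hi with hi; injection hj with hj
        subst hi; subst hj
        exact hind.1 (Or.inr (Or.inr ⟨t, v, cs, hsend, hrecv⟩))
      · have := swapIdx_lt hlt hc
        rwa [swapIdx_swapIdx] at this
    · rw [key, swapIdx_swapIdx]; exact hi
  · -- (3) FIFO with matching
    intro i j ei ej t v cs hi hj hsend hrecv i' ei' t' v' hlt hi' hpid hsend'
    rw [key] at hi hj hi'
    have hlt2 : swapIdx n i' < swapIdx n i := by
      by_cases hc : i' = n ∧ i = n + 1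
      · exfalso
        rw [hc.1, swapIdx_self, hSn1] at hi'
        rw [hc.2, swapIdx_succ, hSn] at hi
        injection hi with hi; injection hi' with hi'
        subst hi; subst hi'
        exact hns ⟨hpid.symm, t, v, t', v', ej.pid, hsend, hsend'⟩
      · exact swapIdx_lt hlt hc
    rcases h3 _ _ ei ej t v cs hi hj hsend hrecv _ ei' t' v' hlt2 hi' hpid hsend'
      with hF | ⟨j', ej', cs', hj'lt, hj', hpj, hactj⟩
    · exact Or.inl hF
    · right
      refine ⟨swapIdx n j', ej', cs', ?_, ?_, hpj, hactj⟩
      · by_cases hc : j' = n ∧ swapIdx n j = n + 1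
        · exfalso
          rw [hc.1, hSn] at hj'
          rw [hc.2, hSn1] at hj
          injection hj' with hj'; injection hj with hj
          subst hj'; subst hj
          exact hind.1 (Or.inl hpj)
        · have := swapIdx_lt hj'lt hc
          rwa [swapIdx_swapIdx] at this
      · rw [key, swapIdx_swapIdx]; exact hj'
  · -- (4a) spawn uniqueness
    intro i j ei ej q hi hj hsi hsj
    rw [key] at hi hj
    have := congrArg (swapIdx n) (h4s _ _ ei ej q hi hj hsi hsj)
    rwa [swapIdx_swapIdx, swapIdx_swapIdx] at this
  · -- (4b) tag uniqueness
    intro i j ei ej t v q v' q' hi hj hsi hsj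
    rw [key] at hi hj
    have := congrArg (swapIdx n) (h4t _ _ ei ej t v q v' q' hi hj hsi hsj)
    rwa [swapIdx_swapIdx, swapIdx_swapIdx] at this
end

section
/- No execution extending a race variant is causally equivalent to the original execution: if τ is a trace with (p : rec(ℓ,cs)) ∈ τ, ℓ' ∈ race_set_τ(ℓ), τ' = variant_τ(ℓ,ℓ'), and τ'' is any trace extending τ' (τ' ≪ τ''), then for all interleavings S ∈ sched(τ) and S'' ∈ sched(τ''), S ≉ S''. -/
variable {Pid Tag Val Cstr : Type}

namespace List

variable {α : Type*}

theorem IsPrefix.getElem?_eq_some {l₁ l₂ : List α} (h : l₁ <+: l₂) {n : ℕ} {a : α}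
    (hn : l₁[n]? = some a) : l₂[n]? = some a := by
  obtain ⟨l, rfl⟩ := h
  rwa [getElem?_append_left (getElem?_eq_some_iff.1 hn).1]

theorem getElem?_filter_eq_some_iff (P : α → Bool) {l : List α} {m : ℕ} {a : α} :
    (l.filter P)[m]? = some a ↔ ∃ k, l[k]? = some a ∧ P a ∧ (l.take k).countP P = m := by
  induction l generalizing m with
  | nil => simp
  | cons b l ih =>
    constructor
    · intro h
      by_cases hb : P b
      · rw [filter_cons_of_pos hb] at h
        cases m with
        | zero => exact ⟨0, by simp_all⟩
        | succ m =>
          obtain ⟨k, hk, ha, rfl⟩ := ih.1 (by simpa using h)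
          exact ⟨k + 1, by simpa using hk, ha, by simp [hb]⟩
      · rw [filter_cons_of_neg hb] at h
        obtain ⟨k, hk, ha, rfl⟩ := ih.1 h
        exact ⟨k + 1, by simpa using hk, ha, by simp [hb]⟩
    · rintro ⟨k, hk, ha, rfl⟩
      cases k with
      | zero => simp_all
      | succ k =>
        have := ih.2 ⟨k, by simpa using hk, ha, rfl⟩
        by_cases hb : P b <;> simp_all

theorem countP_take_lt_countP_take (P : α → Bool) {l : List α} {k k' : ℕ} {a : α}
    (hk : l[k]? = some a) (ha : P a) (hkk' : k < k') :
    (l.take k).countP P < (l.take k').countP P :=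
  calc (l.take k).countP P < (l.take (k + 1)).countP P := by
        simp [take_add_one, hk, countP_append, ha]
    _ ≤ (l.take k').countP P := (take_sublist_take_left hkk').countP_le

theorem exists_getElem?_append_cons_of_mem {l₁ l₂ : List α} {a : α} (b : α) (ha : a ∈ l₂) :
    ∃ n, l₁.length < n ∧ (l₁ ++ b :: l₂)[n]? = some a := by
  obtain ⟨d, hd⟩ := getElem?_of_mem ha
  exact ⟨l₁.length + (d + 1), by omega, by simpa [getElem?_append_right] using hd⟩

end List

section Occurrence

variable [DecidableEq Pid] {S S' : List (MEvent Pid Tag Val Cstr)} {q q' : Pid} {m m' k k' : ℕ}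
  {a a' : MAction Pid Tag Val Cstr}

/-- The `m`-th action of process `q`, namely `a`, is performed by the event at position `k`
of `S`. -/
def OccursAt (S : List (MEvent Pid Tag Val Cstr)) (q : Pid) (m k : ℕ)
    (a : MAction Pid Tag Val Cstr) : Prop :=
  S[k]? = some ⟨q, a⟩ ∧ (S.take k).countP (fun e => decide (e.pid = q)) = m

theorem tr_getElem?_eq_some_iff : (tr S q)[m]? = some a ↔ ∃ k, OccursAt S q m k a := by
  simp only [tr, actions, List.getElem?_map, Option.map_eq_some_iff,
    List.getElem?_filter_eq_some_iff, OccursAt, decide_eq_true_eq]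
  constructor
  · rintro ⟨⟨q, a⟩, ⟨k, hk, rfl, hm⟩, rfl⟩
    exact ⟨k, hk, hm⟩
  · rintro ⟨k, hk, hm⟩
    exact ⟨_, ⟨k, hk, rfl, hm⟩, rfl⟩

theorem OccursAt.lt_of_lt (h : OccursAt S q m k a) (h' : OccursAt S q m' k' a')
    (hmm' : m < m') : k < k' := by
  obtain ⟨hk, rfl⟩ := h
  obtain ⟨hk', rfl⟩ := h'
  by_contra! hle
  rcases hle.eq_or_lt with rfl | hlt
  · exact hmm'.false
  · exact (List.countP_take_lt_countP_take _ hk' (by simp) hlt).asymm hmm'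

theorem OccursAt.eq_of_eq (h : OccursAt S q m k a) (h' : OccursAt S q' m' k a') :
    q = q' ∧ m = m' := by
  obtain ⟨hk, rfl⟩ := h
  obtain ⟨hk', rfl⟩ := h'
  obtain ⟨rfl, -⟩ := MEvent.mk.inj (Option.some.inj (hk.symm.trans hk'))
  exact ⟨rfl, rfl⟩

theorem Swap.actions_eq (h : Swap S S') (q : Pid) : actions q S = actions q S' := by
  obtain ⟨L₁, L₂, e, e', hind, rfl, rfl⟩ := h
  have hne : e.pid ≠ e'.pid := fun hp => hind.1 (Or.inl hp)
  unfold actions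
  simp only [List.filter_append, List.filter_cons]
  by_cases he : e.pid = q <;> by_cases he' : e'.pid = q <;> simp_all

theorem CausalEq.tr_eq (h : CausalEq S S') : tr S = tr S' := by
  induction h with
  | refl => rfl
  | tail _ hswap ih => exact ih.trans (funext hswap.actions_eq)

end Occurrence

namespace IsInterleaving

variable {mtch : Val → Cstr → Bool} {p1 : Pid} {S : List (MEvent Pid Tag Val Cstr)}
  {q r : Pid} {k k' : ℕ} {a : MAction Pid Tag Val Cstr}

theorem spawn_lt (hI : IsInterleaving mtch p1 S) (hq : q ≠ p1) (hk : S[k]? = some ⟨q, a⟩)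
    (hk' : S[k']? = some ⟨r, .spawn q⟩) : k' < k := by
  rcases hI.1 k _ hk with h | ⟨i, ei, hik, hi, -, hact⟩
  · exact absurd h hq
  · exact hI.2.2.2.1 i k' ei _ q hi hk' hact rfl ▸ hik

theorem send_lt_receive (hI : IsInterleaving mtch p1 S) {t : Tag} {v : Val} {cs : Cstr}
    {q' : Pid} (hk : S[k]? = some ⟨r, .send t v q⟩) (hk' : S[k']? = some ⟨q', .receive t cs⟩) :
    k < k' := by
  obtain ⟨i, ei, v', hik', hi, hact, -⟩ := hI.2.1 k' _ t cs hk' rfl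
  exact hI.2.2.2.2 i k ei _ t v' q' v q hi hk hact rfl ▸ hik'

variable [DecidableEq Pid]

theorem exists_hbT_init (hI : IsInterleaving mtch p1 S) (hk : S[k]? = some ⟨q, a⟩)
    (hq : q ≠ p1) (n : ℕ) : ∃ m, hbT (tr S) (p1, m) (q, n) := by
  induction k using Nat.strong_induction_on generalizing q a n with
  | _ k ih =>
    rcases hI.1 k _ hk with h | ⟨i, ⟨r, _⟩, hik, hi, -, rfl⟩
    · exact absurd h hq
    · have hspawn : hbTBase (tr S) (r, (S.take i).countP fun e => decide (e.pid = r)) (q, n) :=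
        Or.inr (Or.inl (tr_getElem?_eq_some_iff.2 ⟨i, hi, rfl⟩))
      by_cases hr : r = p1
      · subst hr
        exact ⟨_, .single hspawn⟩
      · obtain ⟨m, hm⟩ := ih i hik hi hr _
        exact ⟨m, hm.tail hspawn⟩

theorem hbT_of_hbT_spawn_init (hI : IsInterleaving mtch p1 S) {x : Pid × ℕ} {m n : ℕ}
    (hspawn : (tr S r)[m]? = some (.spawn p1)) (hx : hbT (tr S) x (r, m))
    (hn : (tr S q)[n]? = some a) : hbT (tr S) x (q, n) := by
  have hx1 (m' : ℕ) : hbT (tr S) x (p1, m') := hx.tail (Or.inr (Or.inl hspawn))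
  by_cases hq : q = p1
  · exact hq ▸ hx1 n
  · obtain ⟨k, hk, -⟩ := tr_getElem?_eq_some_iff.1 hn
    obtain ⟨m', hm'⟩ := hI.exists_hbT_init hk hq n
    exact (hx1 m').trans hm'

end IsInterleaving

/-- `rdep` only truncates entries of processes spawned by, or receiving a message from, an
action of its worklist, and moves the truncated actions onto the worklist. -/
theorem RDep.apply_eq [DecidableEq Pid] {L : List (MAction Pid Tag Val Cstr)}
    {σ σ' ρ : Pid → List (MAction Pid Tag Val Cstr)} (h : RDep L σ σ') {p : Pid}
    (tainted : MAction Pid Tag Val Cstr → Prop)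
    (hspawn : ∀ q, tainted (.spawn q) → q ≠ p ∧ ∀ a ∈ ρ q, tainted a)
    (hsend : ∀ t v q cs A'' Astar, tainted (.send t v q) →
      A'' ++ .receive t cs :: Astar <+: ρ q → q ≠ p ∧ ∀ a ∈ Astar, tainted a)
    (hL : ∀ a ∈ L, tainted a) (hσ : ∀ q, σ q <+: ρ q) : σ' p = σ p := by
  induction h with
  | nil => rfl
  | rcv _ _ _ _ _ _ ih
  | send_norec _ _ _ _ _ _ _ _ ih => exact ih (fun a ha => hL a (.tail _ ha)) hσ
  | spwn q L σ σ' _ ih =>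
    obtain ⟨hqp, hρq⟩ := hspawn q (hL _ (.head _))
    rw [ih _ _, Function.update_of_ne hqp.symm]
    · intro a ha
      rcases List.mem_append.1 ha with ha | ha
      · exact hL a (.tail _ ha)
      · exact hρq a ((hσ q).subset ha)
    · intro q'
      rcases eq_or_ne q' q with rfl | hq'
      · simp
      · simpa [Function.update_of_ne hq'] using hσ q'
  | send_rec t v q cs L A'' Astar σ σ' hσq _ ih =>
    obtain ⟨hqp, hAstar⟩ := hsend t v q cs A'' Astar (hL _ (.head _)) (hσq ▸ hσ q)
    rw [ih _ _, Function.update_of_ne hqp.symm]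
    · intro a ha
      rcases List.mem_append.1 ha with ha | ha
      · exact hL a (.tail _ ha)
      · exact hAstar a ha
    · intro q'
      rcases eq_or_ne q' q with rfl | hq'
      · simpa using (List.prefix_append _ _).trans (hσq ▸ hσ q')
      · simpa [Function.update_of_ne hq'] using hσ q'

section

variable [DecidableEq Pid] {mtch : Val → Cstr → Bool} {p1 : Pid}
  {S : List (MEvent Pid Tag Val Cstr)} {p q p' : Pid} {j k₀ i : ℕ}
  {a : MAction Pid Tag Val Cstr} {t t' : Tag} {v v' : Val} {cs : Cstr}

/-- `a` is performed, after position `k₀` of `S`, by an event that the `j`-th event of `p`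
happens before. -/
def HappensAfter (S : List (MEvent Pid Tag Val Cstr)) (p : Pid) (j k₀ : ℕ)
    (a : MAction Pid Tag Val Cstr) : Prop :=
  ∃ q m k, OccursAt S q m k a ∧ hbT (tr S) (p, j) (q, m) ∧ k₀ < k

theorem happensAfter_of_lt {a₀ : MAction Pid Tag Val Cstr} (hj : OccursAt S p j k₀ a₀) {n : ℕ}
    (hjn : j < n) (hn : (tr S p)[n]? = some a) : HappensAfter S p j k₀ a := by
  obtain ⟨k, hk⟩ := tr_getElem?_eq_some_iff.1 hn
  exact ⟨p, n, k, hk, .single (Or.inl ⟨rfl, hjn⟩), hj.lt_of_lt hk hjn⟩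

namespace HappensAfter

theorem of_spawn (hI : IsInterleaving mtch p1 S) (h : HappensAfter S p j k₀ (.spawn q))
    (hq : q ≠ p1) {n : ℕ} (hn : (tr S q)[n]? = some a) : HappensAfter S p j k₀ a := by
  obtain ⟨r, m, k, hocc, hhb, hk⟩ := h
  obtain ⟨k', hocc'⟩ := tr_getElem?_eq_some_iff.1 hn
  exact ⟨q, n, k', hocc', hhb.tail (Or.inr (Or.inl (tr_getElem?_eq_some_iff.2 ⟨k, hocc⟩))),
    hk.trans (hI.spawn_lt hq hocc'.1 hocc.1)⟩

theorem lt_of_receive (hI : IsInterleaving mtch p1 S) (h : HappensAfter S p j k₀ (.send t v q))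
    {kr : ℕ} {q' : Pid} (hkr : S[kr]? = some ⟨q', .receive t cs⟩) : k₀ < kr := by
  obtain ⟨r, m, k, hocc, -, hk⟩ := h
  exact hk.trans (hI.send_lt_receive hocc.1 hkr)

theorem of_send (hI : IsInterleaving mtch p1 S) (h : HappensAfter S p j k₀ (.send t v q))
    {n n' : ℕ} (hrcv : (tr S q)[n]? = some (.receive t cs)) (hnn' : n < n')
    (hn' : (tr S q)[n']? = some a) : HappensAfter S p j k₀ a := by
  obtain ⟨kr, hkr⟩ := tr_getElem?_eq_some_iff.1 hrcv
  obtain ⟨k', hk'⟩ := tr_getElem?_eq_some_iff.1 hn'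
  have hk₀ := h.lt_of_receive hI hkr.1
  obtain ⟨r, m, k, hocc, hhb, -⟩ := h
  have hhb_rcv : hbT (tr S) (p, j) (q, n) :=
    hhb.tail (Or.inr (Or.inr ⟨t, v, cs, tr_getElem?_eq_some_iff.2 ⟨k, hocc⟩, hrcv⟩))
  exact ⟨q, n', k', hk', hhb_rcv.tail (Or.inl ⟨rfl, hnn'⟩), hk₀.trans (hkr.lt_of_lt hk' hnn')⟩

/-- By uniqueness of message tags, the send is the one at `(p', i)`. -/
theorem hbT_of_send (hI : IsInterleaving mtch p1 S) (h : HappensAfter S p j k₀ (.send t' v q))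
    (hsend' : (tr S p')[i]? = some (.send t' v' p)) : hbT (tr S) (p, j) (p', i) := by
  obtain ⟨r, m, k, hocc, hhb, -⟩ := h
  obtain ⟨k', hocc'⟩ := tr_getElem?_eq_some_iff.1 hsend'
  obtain rfl := hI.2.2.2.2 k k' _ _ t' v q v' p hocc.1 hocc'.1 rfl rfl
  obtain ⟨rfl, rfl⟩ := hocc.eq_of_eq hocc'
  exact hhb

theorem spawn_closed (hI : IsInterleaving mtch p1 S) {a₀ a' : MAction Pid Tag Val Cstr}
    (hj : OccursAt S p j k₀ a₀) (hi : (tr S p')[i]? = some a')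
    (hnhb : ¬ hbT (tr S) (p, j) (p', i)) (B : List (MAction Pid Tag Val Cstr)) (q : Pid)
    (h : HappensAfter S p j k₀ (.spawn q)) :
    q ≠ p ∧ ∀ a ∈ Function.update (tr S) p B q, HappensAfter S p j k₀ a := by
  have hq1 : q ≠ p1 := by
    rintro rfl
    obtain ⟨r, m, k, hocc, hhb, -⟩ := h
    exact hnhb (hI.hbT_of_hbT_spawn_init (tr_getElem?_eq_some_iff.2 ⟨k, hocc⟩) hhb hi)
  have hqp : q ≠ p := by
    rintro rfl
    obtain ⟨r, m, k, hocc, -, hk⟩ := h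
    exact hk.asymm (hI.spawn_lt hq1 hj.1 hocc.1)
  refine ⟨hqp, fun a ha => ?_⟩
  rw [Function.update_of_ne hqp] at ha
  obtain ⟨n, hn⟩ := List.getElem?_of_mem ha
  exact h.of_spawn hI hq1 hn

theorem send_closed (hI : IsInterleaving mtch p1 S) {A : List (MAction Pid Tag Val Cstr)}
    {a₀ : MAction Pid Tag Val Cstr} (hA : A <+: tr S p) (hj : OccursAt S p A.length k₀ a₀)
    (hsend' : (tr S p')[i]? = some (.send t' v' p)) (hnhb : ¬ hbT (tr S) (p, A.length) (p', i))
    (t₀ : Tag) (v₀ : Val) (q : Pid) (cs₀ : Cstr) (A'' Astar : List (MAction Pid Tag Val Cstr))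
    (h : HappensAfter S p A.length k₀ (.send t₀ v₀ q))
    (hpre : A'' ++ .receive t₀ cs₀ :: Astar <+:
      Function.update (tr S) p (A ++ [.receive t' cs]) q) :
    q ≠ p ∧ ∀ a ∈ Astar, HappensAfter S p A.length k₀ a := by
  have hrcv := hpre.getElem?_eq_some (n := A''.length) (a := .receive t₀ cs₀) (by simp)
  rcases eq_or_ne q p with rfl | hqp
  · exfalso
    rw [Function.update_self] at hrcv
    rcases lt_trichotomy A''.length A.length with hlt | heq | hgt
    · rw [List.getElem?_append_left hlt] at hrcv
      obtain ⟨kr, hkr⟩ := tr_getElem?_eq_some_iff.1 (hA.getElem?_eq_some hrcv)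
      exact (h.lt_of_receive hI hkr.1).asymm (hkr.lt_of_lt hj hlt)
    · rw [heq, List.getElem?_concat_length] at hrcv
      cases hrcv
      exact hnhb (h.hbT_of_send hI hsend')
    · rw [List.getElem?_eq_none (by simpa using hgt)] at hrcv
      cases hrcv
  · rw [Function.update_of_ne hqp] at hrcv hpre
    refine ⟨hqp, fun a ha => ?_⟩
    obtain ⟨n, hn, hna⟩ := List.exists_getElem?_append_cons_of_mem (.receive t₀ cs₀) ha
    exact h.of_send hI hrcv hn (hpre.getElem?_eq_some hna)

end HappensAfter

end

/-- Theorem 3: no execution extending a race variant is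
causally equivalent to the original execution. -/
theorem race_variant_not_causalEq [DecidableEq Pid]
    (mtch : Val → Cstr → Bool) (p1 : Pid)
    (τ τ' τ'' : Pid → List (MAction Pid Tag Val Cstr)) (p : Pid)
    (A A' : List (MAction Pid Tag Val Cstr)) (t : Tag) (cs : Cstr) (t' : Tag)
    (hτp : τ p = A ++ MAction.receive t cs :: A')
    (hrace : InRaceSet mtch τ p A.length t cs t')
    (hvariant : RDep A' (Function.update τ p (A ++ [MAction.receive t' cs])) τ')
    (hext : Subtrace τ' τ'')
    (S S'' : List (MEvent Pid Tag Val Cstr))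
    (hS : InSched mtch p1 τ S) (hS'' : InSched mtch p1 τ'' S'') :
    ¬ CausalEq S S'' := by
  obtain ⟨hI, rfl⟩ := hS
  obtain ⟨-, rfl⟩ := hS''
  obtain ⟨p', i, ht', v', hsend', -, hnhb, -⟩ := hrace
  have hrcv : (tr S p)[A.length]? = some (.receive t cs) := by simp [hτp]
  obtain ⟨k₀, hj⟩ := tr_getElem?_eq_some_iff.1 hrcv
  have hA : A <+: tr S p := hτp ▸ List.prefix_append _ _
  have hτ'p : τ' p = A ++ [.receive t' cs] := by
    refine (hvariant.apply_eq (HappensAfter S p A.length k₀)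
      (HappensAfter.spawn_closed hI hj hsend' hnhb _)
      (HappensAfter.send_closed hI hA hj hsend' hnhb) (fun a ha => ?_)
      (fun _ => List.prefix_refl _)).trans (Function.update_self ..)
    obtain ⟨n, hn, hna⟩ := List.exists_getElem?_append_cons_of_mem (.receive t cs) ha
    exact happensAfter_of_lt hj hn (hτp ▸ hna)
  intro hCE
  have hrcv' : (tr S'' p)[A.length]? = some (.receive t' cs) :=
    (hext p).getElem?_eq_some (by simp [hτ'p])
  rw [← hCE.tr_eq, hrcv] at hrcv'
  cases hrcv'
  exact ht' rfl
end
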